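/- Let k > 0 and R > 0, and for x, y in EuclideanSpace ℝ (Fin 3) with x ≠ y define G^i(x,y) := (1/(2k²))·(e^{−k‖x−y‖} − e^{ik‖x−y‖})/(4π‖x−y‖) (a complex number, where e^{−k‖x−y‖} is a real exponential and e^{ik‖x−y‖} = Complex.exp(I·k‖x−y‖)). There exists a constant C > 0 such that for all x, y with ‖y‖ ≤ R and ‖x‖ ≥ 2R, one has |‖x‖·e^{−ik‖x‖}·G^i(x,y) + (1/(8πk²))·e^{−ik·⟪x,y⟫/‖x‖}| ≤ C/‖x‖. -/

import Mathlib

/-!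
Write `t = ‖x‖`, `r = ‖x - y‖` and `p = ⟪x, y⟫ / ‖x‖`. Up to the factor `(8πk²)⁻¹`, the remainder is
`(t/r) e^{-kr} e^{-ikt} + (e^{-ikp} - e^{ik(r-t)}) + (1 - t/r) e^{ik(r-t)}`.
The first term decays exponentially in `t`. The second is at most `k |r - (t - p)|`, which is
`O(‖y‖²/t)` because `r² = (t - p)² + (‖y‖² - p²)`. The third is `|r - t|/r ≤ 2R/t`.
-/

open scoped RealInnerProductSpace

/-- The incident point-source field for the biharmonic wave equation:
`G^i(x,y) = (1/(2k²))·(e^{-k‖x-y‖} - e^{ik‖x-y‖})/(4π‖x-y‖)`. -/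
noncomputable def pointSourceField (k : ℝ) (x y : EuclideanSpace ℝ (Fin 3)) : ℂ :=
  (1 / (2 * (k : ℂ) ^ 2)) *
    (((Real.exp (-(k * ‖x - y‖)) : ℝ) : ℂ) - Complex.exp (Complex.I * (k * ‖x - y‖)))
    / (4 * (Real.pi : ℂ) * (‖x - y‖ : ℂ))

open Complex in
lemma norm_exp_I_mul_sub_exp_I_mul_le (a b : ℝ) :
    ‖exp (I * a) - exp (I * b)‖ ≤ |a - b| := by
  have hfactor : exp (I * a) - exp (I * b) = exp (I * b) * (exp (I * ↑(a - b)) - 1) := by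
    rw [mul_sub, ← exp_add, mul_one]
    push_cast
    ring_nf
  rw [hfactor, norm_mul, mul_comm I, norm_exp_ofReal_mul_I, one_mul]
  exact Real.norm_exp_I_mul_ofReal_sub_one_le

lemma abs_norm_sub_sub_inner_div_norm_le {E : Type*} [NormedAddCommGroup E]
    [InnerProductSpace ℝ E] (x y : E) (h : 2 * ‖y‖ ≤ ‖x‖) :
    |‖x - y‖ - (‖x‖ - ⟪x, y⟫ / ‖x‖)| ≤ ‖y‖ ^ 2 / ‖x‖ := by
  rcases (norm_nonneg x).eq_or_lt with hx | hx
  · have hy : y = 0 := norm_eq_zero.1 (by linarith [norm_nonneg y])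
    simp [hy, ← hx]
  set p := ⟪x, y⟫ / ‖x‖
  have hp : |p| ≤ ‖y‖ := by
    rw [abs_div, abs_norm, div_le_iff₀ hx, mul_comm]
    exact abs_real_inner_le_norm x y
  have hsq : ‖x - y‖ ^ 2 - (‖x‖ - p) ^ 2 = ‖y‖ ^ 2 - p ^ 2 := by
    have hxp : ‖x‖ * p = ⟪x, y⟫ := mul_div_cancel₀ _ hx.ne'
    rw [norm_sub_sq_real]
    linear_combination 2 * hxp
  have hrp : p ≤ ‖x - y‖ := by
    linarith [norm_sub_norm_le x y, le_abs_self p]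
  have hp_sq : p ^ 2 ≤ ‖y‖ ^ 2 := sq_le_sq' (abs_le.1 hp).1 (abs_le.1 hp).2
  have hnonneg : 0 ≤ ‖x - y‖ - (‖x‖ - p) := by
    nlinarith [norm_nonneg (x - y), abs_le.1 hp]
  rw [abs_of_nonneg hnonneg, le_div_iff₀ hx]
  nlinarith

lemma div_mul_exp_neg_mul_le {k t r : ℝ} (hk : 0 < k) (ht : 0 < t) (htr : t ≤ 2 * r) :
    t / r * Real.exp (-(k * r)) ≤ 4 / (k * t) := by
  have hr : 0 < r := by linarith
  have hdecay : k * r * Real.exp (-(k * r)) ≤ 1 :=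
    (Real.mul_exp_neg_le_exp_neg_one _).trans (Real.exp_le_one_iff.2 (by norm_num))
  rw [div_mul_eq_mul_div, div_le_div_iff₀ hr (by positivity)]
  refine le_of_mul_le_mul_right ?_ hr
  nlinarith [mul_le_mul_of_nonneg_left hdecay (sq_nonneg t),
    mul_nonneg (by linarith : 0 ≤ 2 * r - t) (by linarith : 0 ≤ 2 * r + t)]

open Complex in
lemma norm_farfield_remainder_le (k t r p : ℝ) (ht : 0 ≤ t) (hr : 0 < r) :
    ‖(t : ℂ) * exp (-(I * (k * t))) * ((1 / (2 * (k : ℂ) ^ 2)) *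
          (((Real.exp (-(k * r)) : ℝ) : ℂ) - exp (I * (k * r))) / (4 * (Real.pi : ℂ) * r))
        + 1 / (8 * (Real.pi : ℂ) * (k : ℂ) ^ 2) * exp (-(I * (k * p)))‖
      ≤ (t / r * Real.exp (-(k * r)) + |k| * |r - (t - p)| + |r - t| / r)
          / (8 * Real.pi * k ^ 2) := by
  have hsplit : (t : ℂ) * exp (-(I * (k * t))) * ((1 / (2 * (k : ℂ) ^ 2)) *
          (((Real.exp (-(k * r)) : ℝ) : ℂ) - exp (I * (k * r))) / (4 * (Real.pi : ℂ) * r))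
        + 1 / (8 * (Real.pi : ℂ) * (k : ℂ) ^ 2) * exp (-(I * (k * p)))
      = ((1 / (8 * Real.pi * k ^ 2) : ℝ) : ℂ) *
          (((t / r * Real.exp (-(k * r)) : ℝ) : ℂ) * exp (I * ↑(-(k * t)))
            + (exp (I * ↑(-(k * p))) - exp (I * ↑(k * (r - t))))
            + ((1 - t / r : ℝ) : ℂ) * exp (I * ↑(k * (r - t)))) := by
    have hshift : exp (I * ↑(k * (r - t))) = exp (I * (k * r)) * exp (-(I * (k * t))) := by
      rw [← exp_add]
      push_cast
      ring_nf
    rw [hshift]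
    push_cast
    ring_nf
  have hphase : |-(k * p) - k * (r - t)| = |k| * |r - (t - p)| := by
    rw [← abs_mul, ← abs_neg]
    congr 1
    ring
  have hratio : |1 - t / r| = |r - t| / r := by
    rw [one_sub_div hr.ne', abs_div, abs_of_pos hr]
  rw [hsplit, norm_mul, Complex.norm_real, Real.norm_of_nonneg (by positivity), one_div,
    inv_mul_eq_div]
  gcongr
  refine (norm_add_le _ _).trans (add_le_add ((norm_add_le _ _).trans (add_le_add ?_ ?_)) ?_)
  · rw [norm_mul, Complex.norm_real, mul_comm I, norm_exp_ofReal_mul_I, mul_one,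
      Real.norm_of_nonneg (by positivity)]
  · exact (norm_exp_I_mul_sub_exp_I_mul_le _ _).trans hphase.le
  · rw [norm_mul, Complex.norm_real, mul_comm I, norm_exp_ofReal_mul_I, mul_one,
      Real.norm_eq_abs, hratio]

/-- Uniform far-field asymptotics of the biharmonic point-source field:
`‖x‖·e^{-ik‖x‖}·G^i(x,y) = -(1/(8πk²))·e^{-ik⟪x,y⟫/‖x‖} + O(1/‖x‖)` uniformly for
`‖y‖ ≤ R` and `‖x‖ ≥ 2R`. -/
theorem pointSource_farfield (k R : ℝ) (hk : 0 < k) (hR : 0 < R) :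
    ∃ C : ℝ, 0 < C ∧ ∀ x y : EuclideanSpace ℝ (Fin 3), ‖y‖ ≤ R → 2 * R ≤ ‖x‖ →
      ‖((‖x‖ : ℂ) * Complex.exp (-(Complex.I * (k * ‖x‖))) * pointSourceField k x y
        + (1 / (8 * (Real.pi : ℂ) * (k : ℂ) ^ 2))
          * Complex.exp (-(Complex.I * (k * (⟪x, y⟫ / ‖x‖)))))‖ ≤ C / ‖x‖ := by
  refine ⟨(4 / k + k * R ^ 2 + 2 * R) / (8 * Real.pi * k ^ 2), by positivity, ?_⟩
  intro x y hy hx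
  have ht : 0 < ‖x‖ := by linarith
  have hdist : |‖x - y‖ - ‖x‖| ≤ R :=
    calc |‖x - y‖ - ‖x‖| ≤ ‖x - y - x‖ := abs_norm_sub_norm_le _ _
      _ = ‖y‖ := by rw [sub_sub_cancel_left, norm_neg]
      _ ≤ R := hy
  have hr : ‖x‖ ≤ 2 * ‖x - y‖ := by linarith [(abs_le.1 hdist).1]
  have hphase : |‖x - y‖ - (‖x‖ - ⟪x, y⟫ / ‖x‖)| ≤ R ^ 2 / ‖x‖ :=
    (abs_norm_sub_sub_inner_div_norm_le x y (by linarith)).trans (by gcongr)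
  have hremainder := norm_farfield_remainder_le k ‖x‖ ‖x - y‖ (⟪x, y⟫ / ‖x‖) ht.le (by linarith)
  rw [Complex.ofReal_div] at hremainder
  rw [pointSourceField]
  refine hremainder.trans ?_
  rw [div_right_comm, abs_of_pos hk]
  gcongr ?_ / _
  calc _ ≤ 4 / (k * ‖x‖) + k * (R ^ 2 / ‖x‖) + R / (‖x‖ / 2) := by
        gcongr
        · exact div_mul_exp_neg_mul_le hk ht hr
        · linarith
    _ = (4 / k + k * R ^ 2 + 2 * R) / ‖x‖ := by field_simp
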